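/- Let $X$ and $Y$ be Hilbert spaces, let $u \in L^2(0,T;X)$ take values in a finite-dimensional subspace $W \subset X$, and let $L : W \to Y$ be a linear map. Let $\{\lambda_i, \varphi_i\}_{i=1}^s$ ($\lambda_1 \ge \cdots \ge \lambda_s > 0$) be the nonzero eigenvalue-eigenvector pairs of $\mathcal{R}x = \int_0^T (x,u(t))_X\,u(t)\,dt$, with $\{\varphi_i\}$ orthonormal in $X$, and suppose $u(t) = \sum_{i=1}^s (u(t),\varphi_i)_X \varphi_i$ for a.e. $t$. Define $\Pi_r u = \sum_{i=1}^r (u(t),\varphi_i)_X\varphi_i$ for $r \le s$. Then $\int_0^T \|L(u(t) - \Pi_r u(t))\|_Y^2\,dt = \sum_{i=r+1}^s \lambda_i \|L\varphi_i\|_Y^2$. -/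

import Mathlib

/-!
Write `c i t = (u t, φ i)`. Pairing the eigenvalue equation `𝓡 φ j = λ j φ j` with `φ i` and using
orthonormality shows that the coefficients are orthogonal in `L²(0,T)`:
`∫ c i c j = λ i δ i j`. Almost everywhere `u - Π_r u = ∑_{i ≥ r} c i φ i`, so expanding
`‖∑_{i ≥ r} c i L φ i‖²` as a double sum and integrating term by term leaves only the diagonal.
-/

open MeasureTheory Set

section

variable {α : Type*} [MeasurableSpace α] {μ : Measure α}

theorem norm_sum_smul_sq {F ι : Type*} [NormedAddCommGroup F] [InnerProductSpace ℝ F]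
    (S : Finset ι) (c : ι → ℝ) (y : ι → F) :
    ‖∑ i ∈ S, c i • y i‖ ^ 2 = ∑ i ∈ S, ∑ j ∈ S, c i * c j * inner ℝ (y i) (y j) := by
  rw [← real_inner_self_eq_norm_sq, sum_inner]
  simp only [inner_sum, real_inner_smul_left, real_inner_smul_right]
  exact Finset.sum_congr rfl fun i _ => Finset.sum_congr rfl fun j _ => by ring

theorem integral_norm_sum_smul_sq_of_integral_mul_eq_ite {F ι : Type*} [NormedAddCommGroup F]
    [InnerProductSpace ℝ F] [DecidableEq ι] (S : Finset ι) {c : ι → α → ℝ}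
    (hc : ∀ i, MemLp (c i) 2 μ) {lam : ι → ℝ}
    (hgram : ∀ i j, ∫ t, c i t * c j t ∂μ = if i = j then lam i else 0) (y : ι → F) :
    ∫ t, ‖∑ i ∈ S, c i t • y i‖ ^ 2 ∂μ = ∑ i ∈ S, lam i * ‖y i‖ ^ 2 := by
  have hint : ∀ i j, Integrable (fun t => c i t * c j t) μ := fun i j =>
    (hc i).integrable_mul (hc j)
  simp only [norm_sum_smul_sq]
  rw [integral_finsetSum _ fun i _ => integrable_finsetSum _ fun j _ => (hint i j).mul_const _]
  refine Finset.sum_congr rfl fun i hi => ?_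
  rw [integral_finsetSum _ fun j _ => (hint i j).mul_const _]
  simp only [integral_mul_const, hgram, ite_mul, zero_mul, Finset.sum_ite_eq, if_pos hi,
    real_inner_self_eq_norm_sq]

theorem integral_inner_mul_inner_of_eigen {E ι : Type*} [NormedAddCommGroup E]
    [InnerProductSpace ℝ E] [CompleteSpace E] [DecidableEq ι] {u : α → E} (hu : MemLp u 2 μ)
    {lam : ι → ℝ} {φ : ι → E} (hφ : Orthonormal ℝ φ)
    (heig : ∀ j, ∫ t, inner ℝ (φ j) (u t) • u t ∂μ = lam j • φ j) (i j : ι) :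
    ∫ t, inner ℝ (u t) (φ i) * inner ℝ (u t) (φ j) ∂μ = if i = j then lam i else 0 := by
  have hsmul : Integrable (fun t => inner ℝ (φ j) (u t) • u t) μ :=
    memLp_one_iff_integrable.1 (hu.smul (hu.const_inner (φ j)))
  have hintegrand : ∀ t, inner ℝ (u t) (φ i) * inner ℝ (u t) (φ j)
      = inner ℝ (φ i) (inner ℝ (φ j) (u t) • u t) := fun t => by
    rw [real_inner_smul_right, real_inner_comm (u t), real_inner_comm (u t), mul_comm]
  rw [integral_congr_ae (.of_forall hintegrand), integral_inner hsmul, heig,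
    real_inner_smul_right, orthonormal_iff_ite.1 hφ i j]
  split_ifs with hij
  · rw [hij, mul_one]
  · rw [mul_zero]

end

theorem stmt6_general {X Y : Type*} [NormedAddCommGroup X] [InnerProductSpace ℝ X]
    [NormedAddCommGroup Y] [InnerProductSpace ℝ Y]
    (T : ℝ)
    (W : Submodule ℝ X) [FiniteDimensional ℝ W]
    (u : ℝ → W)
    (hu : MemLp (fun t => (u t : X)) 2 (volume.restrict (Ioc (0:ℝ) T)))
    (L : W →ₗ[ℝ] Y)
    (s : ℕ) (lam : Fin s → ℝ) (φ : Fin s → W)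
    (hφ : Orthonormal ℝ φ)
    (heig : ∀ j, (∫ t, (inner ℝ (φ j) (u t) : ℝ) • u t ∂(volume.restrict (Ioc (0:ℝ) T)))
      = lam j • φ j)
    (hexp : ∀ᵐ t ∂(volume.restrict (Ioc (0:ℝ) T)),
      u t = ∑ i, (inner ℝ (u t) (φ i) : ℝ) • φ i)
    (r : ℕ) :
    ∫ t, ‖L (u t - ∑ i ∈ Finset.univ.filter (fun i : Fin s => (i : ℕ) < r),
          (inner ℝ (u t) (φ i) : ℝ) • φ i)‖ ^ 2 ∂(volume.restrict (Ioc (0:ℝ) T))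
      = ∑ i ∈ Finset.univ.filter (fun i : Fin s => r ≤ (i : ℕ)), lam i * ‖L (φ i)‖ ^ 2 := by
  have huW : MemLp u 2 (volume.restrict (Ioc 0 T)) :=
    (LipschitzWith.memLp_comp_iff_of_antilipschitz W.subtypeₗᵢ.lipschitz
      W.subtypeₗᵢ.antilipschitz W.subtypeₗᵢ.map_zero).1 hu
  have hresidual : ∀ᵐ t ∂(volume.restrict (Ioc (0:ℝ) T)),
      ‖L (u t - ∑ i ∈ Finset.univ.filter (fun i : Fin s => (i : ℕ) < r),
          (inner ℝ (u t) (φ i) : ℝ) • φ i)‖ ^ 2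
        = ‖∑ i ∈ Finset.univ.filter (fun i : Fin s => r ≤ (i : ℕ)),
          (inner ℝ (u t) (φ i) : ℝ) • L (φ i)‖ ^ 2 := by
    filter_upwards [hexp] with t ht
    have hsplit := Finset.sum_filter_add_sum_filter_not Finset.univ (fun i : Fin s => (i : ℕ) < r)
      fun i => (inner ℝ (u t) (φ i) : ℝ) • φ i
    rw [← ht, ← eq_sub_iff_add_eq'] at hsplit
    simp only [not_lt] at hsplit
    simp only [← hsplit, map_sum, map_smul]
  rw [integral_congr_ae hresidual]
  exact integral_norm_sum_smul_sq_of_integral_mul_eq_ite _ (fun i => huW.inner_const (φ i))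
    (integral_inner_mul_inner_of_eigen huW hφ heig) _

/-- POD projection error formula in a seminorm induced by a linear map `L`:
`∫₀ᵀ ‖L(u(t) - Π_r u(t))‖² dt = ∑_{i=r+1}^s λ_i ‖L φ_i‖²`. -/
theorem stmt6 {X Y : Type*} [NormedAddCommGroup X] [InnerProductSpace ℝ X] [CompleteSpace X]
    [NormedAddCommGroup Y] [InnerProductSpace ℝ Y]
    (T : ℝ) (hT : 0 < T)
    (W : Submodule ℝ X) [FiniteDimensional ℝ W]
    (u : ℝ → W)
    (hu : MemLp (fun t => (u t : X)) 2 (volume.restrict (Ioc (0:ℝ) T)))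
    (L : W →ₗ[ℝ] Y)
    (s : ℕ) (lam : Fin s → ℝ) (φ : Fin s → W)
    (hlam_pos : ∀ i, 0 < lam i)
    (hlam_mono : ∀ i j : Fin s, i ≤ j → lam j ≤ lam i)
    (hφ : Orthonormal ℝ φ)
    (heig : ∀ j, (∫ t, (inner ℝ (φ j) (u t) : ℝ) • u t ∂(volume.restrict (Ioc (0:ℝ) T)))
      = lam j • φ j)
    (hexp : ∀ᵐ t ∂(volume.restrict (Ioc (0:ℝ) T)),
      u t = ∑ i, (inner ℝ (u t) (φ i) : ℝ) • φ i)
    (r : ℕ) (hr : r ≤ s) :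
    ∫ t, ‖L (u t - ∑ i ∈ Finset.univ.filter (fun i : Fin s => (i : ℕ) < r),
          (inner ℝ (u t) (φ i) : ℝ) • φ i)‖ ^ 2 ∂(volume.restrict (Ioc (0:ℝ) T))
      = ∑ i ∈ Finset.univ.filter (fun i : Fin s => r ≤ (i : ℕ)), lam i * ‖L (φ i)‖ ^ 2 :=
  stmt6_general T W u hu L s lam φ hφ heig hexp r
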